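/- arXiv:1103.3110 — 2 statements merged into one kernel-verified Lean document; each statement's English description precedes it below -/
import Mathlib

section
/- Let D = diag(d₁,…,d_g) be a polarization type. Then every matrix M ∈ Sp(2g,ℤ) with M ≡ I_{2g} (mod 2d_g²) belongs to G_D(D)₀; that is, Γ_g(2d_g²) ⊆ G_D(D)₀. Consequently, G_D(D)₀ is a finite index subgroup of Sp(2g,ℤ). -/
open Matrix

/-- The integral symplectic group `Sp(2g,ℤ)`, realized as `(g ⊕ g) × (g ⊕ g)` matrices. -/
def SpZ (g : ℕ) : Set (Matrix (Fin g ⊕ Fin g) (Fin g ⊕ Fin g) ℤ) :=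
  {M | M * Matrix.fromBlocks 0 1 (-1) 0 * M.transpose = Matrix.fromBlocks 0 1 (-1) 0}

/-- The rational symplectic group `Sp(2g,ℚ)`. -/
def SpQ (g : ℕ) : Set (Matrix (Fin g ⊕ Fin g) (Fin g ⊕ Fin g) ℚ) :=
  {M | M * Matrix.fromBlocks 0 1 (-1) 0 * M.transpose = Matrix.fromBlocks 0 1 (-1) 0}

/-- The diagonal polarization matrix `D = diag(d₁,…,d_g)` over `ℚ`. -/
def Dmat (g : ℕ) (dvec : Fin g → ℤ) : Matrix (Fin g) (Fin g) ℚ :=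
  Matrix.diagonal fun i => (dvec i : ℚ)

/-- `G_D = {M ∈ Sp(2g,ℚ) : diag(I,D)⁻¹ · M · diag(I,D) has integer entries}`. -/
def GD (g : ℕ) (dvec : Fin g → ℤ) : Set (Matrix (Fin g ⊕ Fin g) (Fin g ⊕ Fin g) ℚ) :=
  {M | M ∈ SpQ g ∧ ∀ i j, ∃ z : ℤ,
    (((Matrix.fromBlocks 1 0 0 (Dmat g dvec))⁻¹ * M * Matrix.fromBlocks 1 0 0 (Dmat g dvec) :
      Matrix (Fin g ⊕ Fin g) (Fin g ⊕ Fin g) ℚ)) i j = (z : ℚ)}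

/-- The subgroup `G_D(D)₀` of `G_D`: block matrices `(α β; γ δ) ∈ G_D` with
`α = I + Da`, `β = DbD`, `γ = c`, `δ = I + dD` for integer matrices `a,b,c,d`, and such that
the diagonal entries of `D⁻¹α·ᵗβ·D⁻¹` and `γ·ᵗδ` are even integers. -/
def GDD0 (g : ℕ) (dvec : Fin g → ℤ) : Set (Matrix (Fin g ⊕ Fin g) (Fin g ⊕ Fin g) ℚ) :=
  {M | M ∈ GD g dvec ∧
    (∃ a b c d : Matrix (Fin g) (Fin g) ℤ,
      M.toBlocks₁₁ = 1 + Dmat g dvec * a.map (Int.cast : ℤ → ℚ) ∧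
      M.toBlocks₁₂ = Dmat g dvec * b.map (Int.cast : ℤ → ℚ) * Dmat g dvec ∧
      M.toBlocks₂₁ = c.map (Int.cast : ℤ → ℚ) ∧
      M.toBlocks₂₂ = 1 + d.map (Int.cast : ℤ → ℚ) * Dmat g dvec) ∧
    (∀ i, ∃ z : ℤ,
      ((Dmat g dvec)⁻¹ * M.toBlocks₁₁ * (M.toBlocks₁₂)ᵀ * (Dmat g dvec)⁻¹) i i
        = ((2 * z : ℤ) : ℚ)) ∧
    (∀ i, ∃ z : ℤ, (M.toBlocks₂₁ * (M.toBlocks₂₂)ᵀ) i i = ((2 * z : ℤ) : ℚ))}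


/-!
Put `m = d_g`, `eᵢ = m / dᵢ` and `E = diag(e)`, so that `D E = m`. A matrix `M ≡ 1 (mod 2m²)` is
`1 + 2m² X` with `X` integral, and `2m² Y = D (2m E Y) = (2m Y E) D = D (2 E Y E) D` exhibits the
blocks `a, b, d` of `G_D(D)₀`; here `b` is even. Conjugation by `diag(1, D)` keeps `M` integral
because `diag(1, D) · diag(2m², 2m E) = 2m²`. The parity conditions hold because
`D⁻¹ α ᵗβ D⁻¹ = (1 + a D) ᵗb` and `γ = 2m² X₂₁` are even. Finally `Γ_g(2m²)` is the kernel of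
reduction to matrices over the finite ring `ℤ/2m²`, so finitely many of its cosets, each contained
in a coset of `G_D(D)₀`, cover `Sp(2g, ℤ)`.
-/

namespace Matrix

section Inverse

variable {n K : Type*} [Fintype n] [DecidableEq n] [CommRing K]

theorem inv_mul_mul_eq_of_mul_eq_mul {A B C : Matrix n n K} (hA : IsUnit A.det)
    (h : B * A = A * C) : A⁻¹ * B * A = C := by
  rw [Matrix.mul_assoc, h, nonsing_inv_mul_cancel_left _ _ hA]

theorem inv_mul_one_add_mul_mul_transpose_mul_inv {D : Matrix n n K} (hD : IsUnit D.det)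
    (hDt : Dᵀ = D) (A B : Matrix n n K) :
    D⁻¹ * (1 + D * A) * (D * B * D)ᵀ * D⁻¹ = (1 + A * D) * Bᵀ := by
  simp only [transpose_mul, hDt, Matrix.mul_add, Matrix.add_mul, Matrix.mul_assoc, Matrix.mul_one,
    Matrix.one_mul, mul_nonsing_inv _ hD, nonsing_inv_mul_cancel_left _ _ hD]

end Inverse

theorem one_add_smul_fromBlocks {l R : Type*} [DecidableEq l] [Ring R] (c : R)
    (P Q S T : Matrix l l R) :
    1 + c • fromBlocks P Q S T = fromBlocks (1 + c • P) (c • Q) (c • S) (1 + c • T) := by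
  rw [← fromBlocks_one, fromBlocks_smul, fromBlocks_add, zero_add, zero_add]

section Diagonal

variable {n R : Type*} [Fintype n] [DecidableEq n] [CommSemiring R] {d e : n → R} {m : R}

theorem diagonal_mul_diagonal_eq_smul_one (he : ∀ i, d i * e i = m) :
    diagonal d * diagonal e = m • 1 := by
  rw [diagonal_mul_diagonal, smul_one_eq_diagonal, funext he]

theorem diagonal_mul_diagonal_eq_smul_one' (he : ∀ i, d i * e i = m) :
    diagonal e * diagonal d = m • 1 := by
  rw [← diagonal_mul_diagonal_eq_smul_one he, diagonal_mul_diagonal, diagonal_mul_diagonal]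
  simp only [mul_comm]

end Diagonal

end Matrix

theorem RingHom.mapMatrix_transpose {R S n : Type*} [Semiring R] [Semiring S] [Fintype n]
    [DecidableEq n] (f : R →+* S) (Y : Matrix n n R) : (f.mapMatrix Y)ᵀ = f.mapMatrix Yᵀ :=
  transpose_map.symm

theorem Subgroup.exists_finset_inv_mul_mem {G : Type*} [Group G] (H : Subgroup G)
    [H.FiniteIndex] : ∃ s : Finset G, ∀ x, ∃ γ ∈ s, γ⁻¹ * x ∈ H := by
  classical
  have := Fintype.ofFinite (G ⧸ H)
  exact ⟨Finset.univ.image Quotient.out, fun x =>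
    ⟨(x : G ⧸ H).out, Finset.mem_image_of_mem _ (Finset.mem_univ _),
      QuotientGroup.eq.mp (QuotientGroup.out_eq' _)⟩⟩

namespace SymplecticGroup

variable (l : Type*) [Fintype l] [DecidableEq l]

def Gamma (n : ℕ) : Subgroup (symplecticGroup l ℤ) :=
  (((Int.castRingHom (ZMod n)).mapMatrix (m := l ⊕ l)).toMonoidHom.comp
    (symplecticGroup l ℤ).subtype).toHomUnits.ker

variable {l}

theorem mem_Gamma_iff {n : ℕ} {A : symplecticGroup l ℤ} :
    A ∈ Gamma l n ↔ ∀ i j, (n : ℤ) ∣ ((A : Matrix (l ⊕ l) (l ⊕ l) ℤ) - 1) i j := by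
  rw [Gamma, MonoidHom.mem_ker, Units.ext_iff, MonoidHom.coe_toHomUnits, Units.val_one]
  change (A : Matrix (l ⊕ l) (l ⊕ l) ℤ).map (Int.cast : ℤ → ZMod n) = 1 ↔ _
  rw [← Matrix.ext_iff]
  refine forall₂_congr fun i j => ?_
  rw [Matrix.sub_apply, ← ZMod.intCast_zmod_eq_zero_iff_dvd, Int.cast_sub, sub_eq_zero, map_apply,
    one_apply, one_apply]
  split_ifs <;> simp

instance (n : ℕ) [NeZero n] : (Gamma l n).FiniteIndex :=
  Subgroup.finiteIndex_ker _

end SymplecticGroup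

theorem mem_SpZ_iff {g : ℕ} {M : Matrix (Fin g ⊕ Fin g) (Fin g ⊕ Fin g) ℤ} :
    M ∈ SpZ g ↔ M ∈ symplecticGroup (Fin g) ℤ := by
  have hJ : (fromBlocks 0 1 (-1) 0 : Matrix (Fin g ⊕ Fin g) (Fin g ⊕ Fin g) ℤ) = -J (Fin g) ℤ := by
    simp [J, fromBlocks_neg]
  rw [SymplecticGroup.mem_iff, SpZ, Set.mem_ofPred_eq, hJ, mul_neg, neg_mul, neg_inj]

section DivisibleBlocks

variable {κ : Type*} [Fintype κ] [DecidableEq κ] {d e : κ → ℤ} {m : ℤ}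

theorem two_mul_sq_smul_eq_diagonal_mul (he : ∀ i, d i * e i = m) (Y : Matrix κ κ ℤ) :
    (2 * m ^ 2) • Y = diagonal d * ((2 * m) • (diagonal e * Y)) := by
  rw [Matrix.mul_smul, ← Matrix.mul_assoc, diagonal_mul_diagonal_eq_smul_one he, smul_one_mul,
    smul_smul]
  ring_nf

theorem two_mul_sq_smul_eq_mul_diagonal (he : ∀ i, d i * e i = m) (Y : Matrix κ κ ℤ) :
    (2 * m ^ 2) • Y = (2 * m) • (Y * diagonal e) * diagonal d := by
  rw [Matrix.smul_mul, Matrix.mul_assoc, diagonal_mul_diagonal_eq_smul_one' he, mul_smul_one,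
    smul_smul]
  ring_nf

theorem two_mul_sq_smul_eq_diagonal_mul_mul_diagonal (he : ∀ i, d i * e i = m)
    (Y : Matrix κ κ ℤ) :
    (2 * m ^ 2) • Y = diagonal d * ((2 : ℤ) • (diagonal e * Y * diagonal e)) * diagonal d := by
  rw [Matrix.mul_smul, Matrix.smul_mul, ← Matrix.mul_assoc, ← Matrix.mul_assoc,
    diagonal_mul_diagonal_eq_smul_one he, Matrix.mul_assoc, diagonal_mul_diagonal_eq_smul_one' he,
    smul_one_mul, Matrix.smul_mul, mul_smul_one, smul_smul, smul_smul]
  ring_nf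

theorem fromBlocks_diagonal_mul_eq_smul_one (he : ∀ i, d i * e i = m) :
    fromBlocks 1 0 0 (diagonal d) * fromBlocks ((2 * m ^ 2) • 1) 0 0 ((2 * m) • diagonal e) =
      (2 * m ^ 2) • (1 : Matrix (κ ⊕ κ) (κ ⊕ κ) ℤ) := by
  simp only [fromBlocks_multiply, Matrix.one_mul, Matrix.mul_zero, Matrix.zero_mul, add_zero,
    zero_add, Matrix.mul_smul, diagonal_mul_diagonal_eq_smul_one he, smul_smul]
  rw [← fromBlocks_one, fromBlocks_smul]
  simp only [smul_zero]
  ring_nf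

end DivisibleBlocks

section Polarization

local notation "ι" => RingHom.mapMatrix (Int.castRingHom ℚ)

theorem map_intCast_eq_mapMatrix {κ : Type*} [Fintype κ] [DecidableEq κ] (X : Matrix κ κ ℤ) :
    X.map (Int.cast : ℤ → ℚ) = ι X := rfl

theorem exists_map_two_smul_apply_self {κ : Type*} [Fintype κ] [DecidableEq κ]
    (Y : Matrix κ κ ℤ) (i : κ) : ∃ z : ℤ, ι ((2 : ℤ) • Y) i i = ((2 * z : ℤ) : ℚ) :=
  ⟨Y i i, rfl⟩

variable {g : ℕ} {dvec e : Fin g → ℤ} {m : ℤ}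

theorem Dmat_eq_mapMatrix : Dmat g dvec = ι (diagonal dvec) :=
  (diagonal_map Int.cast_zero).symm

theorem isUnit_det_Dmat (hd : ∀ i, dvec i ≠ 0) : IsUnit (Dmat g dvec).det := by
  simpa [Dmat, det_diagonal, Finset.prod_ne_zero_iff] using hd

theorem map_mem_SpQ {M : Matrix (Fin g ⊕ Fin g) (Fin g ⊕ Fin g) ℤ} (hM : M ∈ SpZ g) :
    ι M ∈ SpQ g := by
  have := congrArg ι hM
  simp only [map_mul, RingHom.mapMatrix_apply, transpose_map, fromBlocks_map] at this
  simpa [SpQ, Matrix.map_neg] using this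

theorem exists_inv_mul_map_mul_eq_intCast (hd : ∀ i, dvec i ≠ 0) (he : ∀ i, dvec i * e i = m)
    (X : Matrix (Fin g ⊕ Fin g) (Fin g ⊕ Fin g) ℤ) (i j : Fin g ⊕ Fin g) :
    ∃ z : ℤ, ((fromBlocks 1 0 0 (Dmat g dvec))⁻¹ * ι (1 + (2 * m ^ 2) • X) *
      fromBlocks 1 0 0 (Dmat g dvec) : Matrix (Fin g ⊕ Fin g) (Fin g ⊕ Fin g) ℚ) i j = z := by
  set P : Matrix (Fin g ⊕ Fin g) (Fin g ⊕ Fin g) ℤ := fromBlocks 1 0 0 (diagonal dvec)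
  set Q : Matrix (Fin g ⊕ Fin g) (Fin g ⊕ Fin g) ℤ :=
    fromBlocks ((2 * m ^ 2) • 1) 0 0 ((2 * m) • diagonal e)
  have hP : fromBlocks 1 0 0 (Dmat g dvec) = ι P := by
    simp [P, Dmat_eq_mapMatrix, fromBlocks_map]
  have hPdet : IsUnit (ι P).det := by
    rw [← hP, det_fromBlocks_zero₂₁, det_one, one_mul]
    exact isUnit_det_Dmat hd
  have hconj : (1 + (2 * m ^ 2) • X) * P = P * (1 + Q * X * P) := by
    rw [Matrix.add_mul, Matrix.one_mul, Matrix.mul_add, Matrix.mul_one, ← Matrix.mul_assoc,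
      ← Matrix.mul_assoc, fromBlocks_diagonal_mul_eq_smul_one he, smul_one_mul, Matrix.smul_mul]
  rw [hP, inv_mul_mul_eq_of_mul_eq_mul hPdet (by rw [← map_mul, ← map_mul, hconj])]
  exact ⟨_, rfl⟩

theorem map_one_add_smul_eq_one_add_Dmat_mul (he : ∀ i, dvec i * e i = m)
    (P : Matrix (Fin g) (Fin g) ℤ) :
    ι (1 + (2 * m ^ 2) • P) = 1 + Dmat g dvec * ι ((2 * m) • (diagonal e * P)) := by
  rw [two_mul_sq_smul_eq_diagonal_mul he, Dmat_eq_mapMatrix, map_add, map_one, map_mul]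

theorem map_smul_eq_Dmat_mul_mul_Dmat (he : ∀ i, dvec i * e i = m)
    (Q : Matrix (Fin g) (Fin g) ℤ) :
    ι ((2 * m ^ 2) • Q) =
      Dmat g dvec * ι ((2 : ℤ) • (diagonal e * Q * diagonal e)) * Dmat g dvec := by
  rw [two_mul_sq_smul_eq_diagonal_mul_mul_diagonal he, Dmat_eq_mapMatrix, map_mul, map_mul]

theorem map_one_add_smul_eq_one_add_mul_Dmat (he : ∀ i, dvec i * e i = m)
    (T : Matrix (Fin g) (Fin g) ℤ) :
    ι (1 + (2 * m ^ 2) • T) = 1 + ι ((2 * m) • (T * diagonal e)) * Dmat g dvec := by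
  rw [two_mul_sq_smul_eq_mul_diagonal he, Dmat_eq_mapMatrix, map_add, map_one, map_mul]

theorem exists_Dmat_inv_mul_mul_transpose_mul_Dmat_inv (hd : ∀ i, dvec i ≠ 0)
    (he : ∀ i, dvec i * e i = m) (P Q : Matrix (Fin g) (Fin g) ℤ) (i : Fin g) :
    ∃ z : ℤ, ((Dmat g dvec)⁻¹ * ι (1 + (2 * m ^ 2) • P) * (ι ((2 * m ^ 2) • Q))ᵀ *
      (Dmat g dvec)⁻¹ : Matrix (Fin g) (Fin g) ℚ) i i = ((2 * z : ℤ) : ℚ) := by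
  rw [map_one_add_smul_eq_one_add_Dmat_mul he, map_smul_eq_Dmat_mul_mul_Dmat he,
    inv_mul_one_add_mul_mul_transpose_mul_inv (isUnit_det_Dmat hd) (by simp [Dmat]),
    Dmat_eq_mapMatrix, RingHom.mapMatrix_transpose, ← map_mul, ← map_one ι, ← map_add, ← map_mul,
    transpose_smul, Matrix.mul_smul]
  exact exists_map_two_smul_apply_self _ i

theorem exists_map_smul_mul_transpose_map (S T : Matrix (Fin g) (Fin g) ℤ) (i : Fin g) :
    ∃ z : ℤ, (ι ((2 * m ^ 2) • S) * (ι (1 + (2 * m ^ 2) • T))ᵀ : Matrix (Fin g) (Fin g) ℚ) i i =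
      ((2 * z : ℤ) : ℚ) := by
  rw [RingHom.mapMatrix_transpose, ← map_mul, ← smul_smul, Matrix.smul_mul]
  exact exists_map_two_smul_apply_self _ i

theorem map_one_add_smul_mem_GDD0 (hd : ∀ i, dvec i ≠ 0) (he : ∀ i, dvec i * e i = m)
    {X : Matrix (Fin g ⊕ Fin g) (Fin g ⊕ Fin g) ℤ} (hM : 1 + (2 * m ^ 2) • X ∈ SpZ g) :
    (1 + (2 * m ^ 2) • X).map (Int.cast : ℤ → ℚ) ∈ GDD0 g dvec := by
  refine ⟨⟨map_mem_SpQ hM, exists_inv_mul_map_mul_eq_intCast hd he X⟩, ?_⟩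
  rw [← fromBlocks_toBlocks X, one_add_smul_fromBlocks, fromBlocks_map]
  simp only [toBlocks_fromBlocks₁₁, toBlocks_fromBlocks₁₂, toBlocks_fromBlocks₂₁,
    toBlocks_fromBlocks₂₂, map_intCast_eq_mapMatrix]
  exact ⟨⟨_, _, _, _, map_one_add_smul_eq_one_add_Dmat_mul he _,
      map_smul_eq_Dmat_mul_mul_Dmat he _, rfl, map_one_add_smul_eq_one_add_mul_Dmat he _⟩,
    exists_Dmat_inv_mul_mul_transpose_mul_Dmat_inv hd he _ _,
    exists_map_smul_mul_transpose_map _ _⟩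

end Polarization

theorem map_mem_GDD0_of_dvd_sub_one {g : ℕ} {dvec : Fin g → ℤ} {m : ℤ} (hd : ∀ i, dvec i ≠ 0)
    (hdm : ∀ i, dvec i ∣ m) {M : Matrix (Fin g ⊕ Fin g) (Fin g ⊕ Fin g) ℤ} (hM : M ∈ SpZ g)
    (hcong : ∀ i j, 2 * m ^ 2 ∣ (M - 1) i j) : M.map (Int.cast : ℤ → ℚ) ∈ GDD0 g dvec := by
  choose e he using hdm
  choose X hX using hcong
  obtain rfl : M = 1 + (2 * m ^ 2) • Matrix.of X := by
    ext i j
    rw [Matrix.add_apply, Matrix.smul_apply, of_apply, smul_eq_mul, ← hX, Matrix.sub_apply,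
      add_sub_cancel]
  exact map_one_add_smul_mem_GDD0 hd (fun i => (he i).symm) hM

/-- for a polarization type `D = diag(d₁,…,d_g)`, every `M ∈ Sp(2g,ℤ)` with
`M ≡ I (mod 2d_g²)` belongs to `G_D(D)₀`, i.e. `Γ_g(2d_g²) ⊆ G_D(D)₀`; consequently
`G_D(D)₀` has finite index in `Sp(2g,ℤ)`: finitely many cosets `γᵢ · G_D(D)₀` cover it. -/
theorem stmt_6 (g : ℕ) (hg : 1 ≤ g) (dvec : Fin g → ℤ) (hpos : ∀ i, 0 < dvec i)
    (hdvd : ∀ i j : Fin g, i ≤ j → dvec i ∣ dvec j) :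
    (∀ M : Matrix (Fin g ⊕ Fin g) (Fin g ⊕ Fin g) ℤ, M ∈ SpZ g →
      (∀ i j, (2 * dvec ⟨g - 1, by omega⟩ ^ 2) ∣
        (M - 1) i j) →
      M.map (Int.cast : ℤ → ℚ) ∈ GDD0 g dvec) ∧
    ∃ s : Finset (Matrix (Fin g ⊕ Fin g) (Fin g ⊕ Fin g) ℤ),
      (∀ γ ∈ s, γ ∈ SpZ g) ∧
      ∀ M ∈ SpZ g, ∃ γ ∈ s, ∃ N : Matrix (Fin g ⊕ Fin g) (Fin g ⊕ Fin g) ℤ,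
        N.map (Int.cast : ℤ → ℚ) ∈ GDD0 g dvec ∧ M = γ * N := by
  classical
  set last : Fin g := ⟨g - 1, by omega⟩
  have hd : ∀ i, dvec i ≠ 0 := fun i => (hpos i).ne'
  have hdm : ∀ i, dvec i ∣ dvec last := fun i =>
    hdvd i last (Fin.le_def.2 (Nat.le_sub_one_of_lt i.isLt))
  refine ⟨fun M => map_mem_GDD0_of_dvd_sub_one hd hdm, ?_⟩
  have : NeZero (2 * dvec last ^ 2).natAbs := ⟨by simpa using hd last⟩
  obtain ⟨s, hs⟩ :=
    (SymplecticGroup.Gamma (Fin g) (2 * dvec last ^ 2).natAbs).exists_finset_inv_mul_mem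
  refine ⟨s.image Subtype.val, ?_, fun M hM => ?_⟩
  · simp only [Finset.mem_image]
    rintro _ ⟨γ, -, rfl⟩
    exact mem_SpZ_iff.2 γ.2
  · set M' : symplecticGroup (Fin g) ℤ := ⟨M, mem_SpZ_iff.1 hM⟩
    obtain ⟨γ, hγs, hγ⟩ := hs M'
    refine ⟨γ, Finset.mem_image_of_mem _ hγs, _,
      map_mem_GDD0_of_dvd_sub_one hd hdm (mem_SpZ_iff.2 (γ⁻¹ * M').2) fun i j => ?_,
      (congrArg Subtype.val (mul_inv_cancel_left γ M')).symm⟩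
    simpa [Int.natAbs_dvd] using SymplecticGroup.mem_Gamma_iff.1 hγ i j
end

section
/- Every matrix β in the topological interior of 𝔐̄_g (taken in Sym(g,ℝ)) is Minkowski reduced; moreover 𝔐_g = 𝔐̄_g ∩ {β ∈ Sym(g,ℝ) : β_{1,1} > 0}. -/
open Matrix

/-- Condition M(II) of Minkowski reduction. -/
def MinkII {g : ℕ} (β : Matrix (Fin g) (Fin g) ℝ) : Prop :=
  ∀ k : Fin g, ∀ a : Fin g → ℤ,
    Finset.gcd (Finset.univ.filter fun i => k ≤ i) a = 1 →
      β k k ≤ (fun i => (a i : ℝ)) ⬝ᵥ β.mulVec (fun i => (a i : ℝ))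

/-- Condition M(III) of Minkowski reduction. -/
def MinkIII {g : ℕ} (β : Matrix (Fin g) (Fin g) ℝ) : Prop :=
  ∀ k k' : Fin g, (k' : ℕ) = (k : ℕ) + 1 → 0 ≤ β k k'

/-- The set `𝔐_g` of Minkowski reduced symmetric matrices. -/
def MinkReduced {g : ℕ} (β : Matrix (Fin g) (Fin g) ℝ) : Prop :=
  β.IsSymm ∧ (∀ i : Fin g, (i : ℕ) = 0 → 0 < β i i) ∧ MinkII β ∧ MinkIII β

/-- The closed Minkowski cone `𝔐̄_g`: as `𝔐_g`, but with (I) weakened to `β_{1,1} ≥ 0`. -/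
def MinkClosed {g : ℕ} (β : Matrix (Fin g) (Fin g) ℝ) : Prop :=
  β.IsSymm ∧ (∀ i : Fin g, (i : ℕ) = 0 → 0 ≤ β i i) ∧ MinkII β ∧ MinkIII β

/-- every matrix in the interior of `𝔐̄_g` (taken in `Sym(g,ℝ)`) is Minkowski
reduced; moreover `𝔐_g = 𝔐̄_g ∩ {β : β_{1,1} > 0}`. -/
theorem stmt_16 (g : ℕ) (hg : 1 ≤ g) :
    (∀ β : {β : Matrix (Fin g) (Fin g) ℝ // β.IsSymm},
        β ∈ interior {β : {β : Matrix (Fin g) (Fin g) ℝ // β.IsSymm} | MinkClosed β.val} →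
        MinkReduced β.val) ∧
    {β : Matrix (Fin g) (Fin g) ℝ | MinkReduced β}
      = {β : Matrix (Fin g) (Fin g) ℝ | MinkClosed β} ∩
        {β : Matrix (Fin g) (Fin g) ℝ | 0 < β ⟨0, by omega⟩ ⟨0, by omega⟩} := by
  constructor
  · intro β hβ
    have hcl := interior_subset hβ
    simp only [Set.mem_setOf_eq] at hcl
    refine ⟨hcl.1, ?_, hcl.2.2⟩
    intro i hi
    rcases lt_or_eq_of_le (hcl.2.1 i hi) with h | h
    · exact h
    exfalso
    -- perturb β by subtracting t • E_{ii}
    set D : Matrix (Fin g) (Fin g) ℝ := Matrix.diagonal (Pi.single i 1) with hD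
    have hDsymm : D.IsSymm := Matrix.isSymm_diagonal _
    have hsymm : ∀ t : ℝ, (β.val - t • D).IsSymm := fun t =>
      β.2.sub (hDsymm.smul t)
    set φ : ℝ → {β : Matrix (Fin g) (Fin g) ℝ // β.IsSymm} :=
      fun t => ⟨β.val - t • D, hsymm t⟩ with hφ
    have hφcont : Continuous φ := by
      apply Continuous.subtype_mk
      exact continuous_const.sub (continuous_id.smul continuous_const)
    have hφ0 : φ 0 = β := by
      apply Subtype.ext
      simp [hφ]
    have hnhds : {β : {β : Matrix (Fin g) (Fin g) ℝ // β.IsSymm} | MinkClosed β.val}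
        ∈ nhds β := mem_interior_iff_mem_nhds.mp hβ
    have hpre : φ ⁻¹' {β : {β : Matrix (Fin g) (Fin g) ℝ // β.IsSymm} | MinkClosed β.val}
        ∈ nhds (0 : ℝ) := by
      have := hφcont.continuousAt (x := (0 : ℝ))
      rw [ContinuousAt, hφ0] at this
      exact this hnhds
    have hev : ∀ᶠ t in nhdsWithin (0 : ℝ) (Set.Ioi 0),
        φ t ∈ {β : {β : Matrix (Fin g) (Fin g) ℝ // β.IsSymm} | MinkClosed β.val} :=
      Filter.Eventually.filter_mono nhdsWithin_le_nhds hpre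
    obtain ⟨t, ht, htpos⟩ := (hev.and (eventually_mem_nhdsWithin)).exists
    have hle := ht.2.1 i hi
    have : (φ t).val i i = -t := by
      simp [hφ, hD, Matrix.diagonal_apply_eq, ← h]
    rw [this] at hle
    have : (0:ℝ) < t := htpos
    linarith
  · ext β
    simp only [Set.mem_setOf_eq, Set.mem_inter_iff]
    constructor
    · rintro ⟨h1, h2, h3, h4⟩
      exact ⟨⟨h1, fun i hi => (h2 i hi).le, h3, h4⟩, h2 ⟨0, by omega⟩ rfl⟩
    · rintro ⟨⟨h1, h2, h3, h4⟩, hpos⟩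
      refine ⟨h1, fun i hi => ?_, h3, h4⟩
      have : i = ⟨0, by omega⟩ := Fin.ext hi
      rw [this]
      exact hpos
end
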